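/- For every positive integer k and finite graph G, either G does not contain two vertex-disjoint, pairwise non-adjacent induced paths on k vertices, or G contains two vertex-disjoint pairwise non-adjacent induced paths on k vertices that are both avoidable in G. -/

import Mathlib

variable {V : Type*}

/-- `p` is an induced path on `k` vertices in `G`: injective, and adjacency holds
exactly between consecutive vertices. -/
def IsInducedPathOn (G : SimpleGraph V) (k : ℕ) (p : Fin k → V) : Prop :=
  Function.Injective p ∧
    ∀ i j : Fin k, G.Adj (p i) (p j) ↔ (i.val + 1 = j.val ∨ j.val + 1 = i.val)

/-- `c` is an induced cycle on `n ≥ 3` vertices in `G`: injective, and adjacency holds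
exactly between cyclically consecutive vertices. -/
def IsInducedCycleOn (G : SimpleGraph V) (n : ℕ) (c : Fin n → V) : Prop :=
  3 ≤ n ∧ Function.Injective c ∧
    ∀ i j : Fin n, G.Adj (c i) (c j) ↔ ((i.val + 1) % n = j.val ∨ (j.val + 1) % n = i.val)

/-- The vertices of `q` all lie on some induced cycle of `G`. -/
def InInducedCycle (G : SimpleGraph V) {m : ℕ} (q : Fin m → V) : Prop :=
  ∃ (n : ℕ) (c : Fin n → V), IsInducedCycleOn G n c ∧ Set.range q ⊆ Set.range c

/-- `q` is an extension of the induced path `p`: an induced path on `k+2` vertices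
whose middle `k` vertices are `p` (one new vertex at each end). -/
def IsExtension (G : SimpleGraph V) {k : ℕ} (p : Fin k → V) (q : Fin (k + 2) → V) : Prop :=
  IsInducedPathOn G (k + 2) q ∧ ∀ i : Fin k, q i.succ.castSucc = p i

/-- `p` is an avoidable path in `G`: an induced path each of whose extensions lies on an
induced cycle of `G`. -/
def IsAvoidable (G : SimpleGraph V) {k : ℕ} (p : Fin k → V) : Prop :=
  IsInducedPathOn G k p ∧
    ∀ q : Fin (k + 2) → V, IsExtension G p q → InInducedCycle G q

/-- `v` is an avoidable vertex: every induced path `x–v–y` lies on an induced cycle. -/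
def AvoidableVertex (G : SimpleGraph V) (v : V) : Prop :=
  ∀ x y : V, G.Adj x v → G.Adj v y → x ≠ y → ¬ G.Adj x y → InInducedCycle G ![x, v, y]

/-- `v` lies outside the closed neighbourhood of `w`. -/
def OutsideClosedNbhd (G : SimpleGraph V) (w v : V) : Prop :=
  v ≠ w ∧ ¬ G.Adj w v

/-- Property `H_R(G,k,w)`: either `G − N[w]` has no induced path on `k` vertices,
or there is an induced path on `k` vertices inside `G − N[w]` avoidable in `G`. -/
def HR (G : SimpleGraph V) (k : ℕ) (w : V) : Prop :=
  (¬ ∃ p : Fin k → V, IsInducedPathOn G k p ∧ ∀ i, OutsideClosedNbhd G w (p i)) ∨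
  (∃ p : Fin k → V, IsInducedPathOn G k p ∧ (∀ i, OutsideClosedNbhd G w (p i)) ∧
    ∀ q : Fin (k + 2) → V, IsExtension G p q → InInducedCycle G q)

/-- The graph obtained from `G` by merging adjacent vertices `u₁, u₂` into one vertex
(represented by `u₁`, with `u₂` becoming an isolated stray vertex). -/
def mergeGraph (G : SimpleGraph V) (u₁ u₂ : V) : SimpleGraph V where
  Adj a b := a ≠ b ∧ a ≠ u₂ ∧ b ≠ u₂ ∧
    (G.Adj a b ∨ (a = u₁ ∧ G.Adj u₂ b) ∨ (b = u₁ ∧ G.Adj a u₂))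
  symm := by
    constructor
    rintro a b ⟨h1, h2, h3, h4⟩
    refine ⟨h1.symm, h3, h2, ?_⟩
    rcases h4 with h | ⟨ha, h⟩ | ⟨hb, h⟩
    · exact Or.inl h.symm
    · exact Or.inr (Or.inr ⟨ha, h.symm⟩)
    · exact Or.inr (Or.inl ⟨hb, h.symm⟩)
  loopless := ⟨fun a h => h.1 rfl⟩

/-- `G` is chordal: every induced cycle has exactly three vertices. -/
def Chordal (G : SimpleGraph V) : Prop :=
  ∀ (n : ℕ) (c : Fin n → V), IsInducedCycleOn G n c → n = 3

/-- `v` is a simplicial vertex: its neighbourhood is a clique. -/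
def SimplicialVertex (G : SimpleGraph V) (v : V) : Prop :=
  ∀ x y : V, G.Adj v x → G.Adj v y → x ≠ y → G.Adj x y

/-!
Contract the path `q` to a single vertex `w` by merging its edges one at a time. The vertices
outside `N[q]` then form a union `R` of components of `G - N[w]` containing `p`, and a path of `R`
avoidable in the contracted graph stays avoidable in `G`: an induced cycle through the merged
vertex opens, in `G`, into an induced path whose ends see the two merged vertices, and it closes
again through one of them or through the edge between them.

Such rooted regions are handled by induction on the number of non-isolated vertices, then on
`|R|`. For a neighbour `u` of `w`, either merging `wu` leaves an induced `P_k` in `R \ N(u)`, or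
every induced `P_k` of `R` meets `N(u)`; then `u` is deleted, and an extension starting at `u`
either ends in `R`, giving an induced `P_k` of `R` away from `N(u)`, or ends in `N(w)` and is
closed by `w`. A union of components of `G` is rooted at the last vertex of an induced `P_{k+2}`
inside it; if there is none, its induced `P_k` have no extensions at all. Applying this to `q`,
and then to the avoidable path found, gives the two paths.
-/

open Set Function

section Basics
variable {G G' : SimpleGraph V} {k m n : ℕ}

theorem isInducedCycleOn_iff {c : Fin n → V} :
    IsInducedCycleOn G n c ↔ 3 ≤ n ∧ Injective c ∧ ∀ i j : Fin n, G.Adj (c i) (c j) ↔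
      ((i.val + 1 = j.val ∨ (i.val + 1 = n ∧ j.val = 0)) ∨
        (j.val + 1 = i.val ∨ (j.val + 1 = n ∧ i.val = 0))) := by
  have key : ∀ a b : Fin n,
      (a.val + 1) % n = b.val ↔ a.val + 1 = b.val ∨ (a.val + 1 = n ∧ b.val = 0) := by
    intro a b
    rcases (show a.val + 1 ≤ n from a.isLt).lt_or_eq with h | h
    · rw [Nat.mod_eq_of_lt h]; omega
    · rw [h, Nat.mod_self]; omega
  simp only [IsInducedCycleOn, key]

theorem Fin.val_add_one_mod_eq_iff [NeZero n] (a b : Fin n) :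
    (a.val + 1) % n = b.val ↔ a + 1 = b := by
  rw [Fin.ext_iff, Fin.val_add, Fin.val_one', Nat.add_mod_mod]

theorem IsInducedCycleOn.adj_iff [NeZero n] {c : Fin n → V} (hc : IsInducedCycleOn G n c)
    (i j : Fin n) : G.Adj (c i) (c j) ↔ i + 1 = j ∨ j + 1 = i := by
  rw [hc.2.2, Fin.val_add_one_mod_eq_iff, Fin.val_add_one_mod_eq_iff]

theorem IsInducedCycleOn.rotate {c : Fin n → V} (hc : IsInducedCycleOn G n c) (t : Fin n) :
    IsInducedCycleOn G n (fun i => c (i + t)) := by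
  have : NeZero n := ⟨by have := hc.1; omega⟩
  refine ⟨hc.1, fun i j hij => add_right_cancel (hc.2.1 hij), fun i j => ?_⟩
  rw [hc.adj_iff, Fin.val_add_one_mod_eq_iff, Fin.val_add_one_mod_eq_iff, add_right_comm,
    add_right_comm j, add_left_inj, add_left_inj]

theorem IsInducedCycleOn.tail {c : Fin (n + 1) → V} (hc : IsInducedCycleOn G (n + 1) c) :
    IsInducedPathOn G n (fun i => c i.succ) := by
  obtain ⟨-, hinj, hadj⟩ := isInducedCycleOn_iff.1 hc
  refine ⟨hinj.comp (Fin.succ_injective _), fun i j => ?_⟩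
  rw [hadj]
  simp only [Fin.val_succ]
  omega

theorem IsInducedCycleOn.mem_support {c : Fin n → V} (hc : IsInducedCycleOn G n c) (i : Fin n) :
    c i ∈ G.support := by
  have : NeZero n := ⟨by have := hc.1; omega⟩
  exact ⟨c (i + 1), (hc.adj_iff i _).2 (Or.inl rfl)⟩

theorem IsInducedCycleOn.of_adj_iff {c : Fin n → V} (hc : IsInducedCycleOn G n c)
    (h : ∀ i j, G.Adj (c i) (c j) ↔ G'.Adj (c i) (c j)) : IsInducedCycleOn G' n c :=
  ⟨hc.1, hc.2.1, fun i j => (h i j).symm.trans (hc.2.2 i j)⟩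

theorem IsInducedPathOn.of_adj_iff {p : Fin k → V} (hp : IsInducedPathOn G k p)
    (h : ∀ i j, G.Adj (p i) (p j) ↔ G'.Adj (p i) (p j)) : IsInducedPathOn G' k p :=
  ⟨hp.1, fun i j => (h i j).symm.trans (hp.2 i j)⟩

theorem IsInducedPathOn.rev {p : Fin k → V} (hp : IsInducedPathOn G k p) :
    IsInducedPathOn G k (p ∘ Fin.rev) := by
  refine ⟨hp.1.comp Fin.rev_injective, fun i j => ?_⟩
  rw [comp_apply, comp_apply, hp.2, Fin.val_rev, Fin.val_rev]
  omega

theorem IsInducedPathOn.segment {p : Fin m → V} (hp : IsInducedPathOn G m p) (t : ℕ)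
    (h : t + k ≤ m) : IsInducedPathOn G k (fun i : Fin k => p ⟨t + i, by omega⟩) := by
  refine ⟨fun i j hij => Fin.ext ?_, fun i j => ?_⟩
  · have := congrArg Fin.val (hp.1 hij)
    simp only at this
    omega
  · rw [hp.2]
    simp only
    omega

theorem IsInducedPathOn.cons {p : Fin (k + 1) → V} (hp : IsInducedPathOn G (k + 1) p) {v : V}
    (hv : v ∉ range p) (h0 : G.Adj v (p 0)) (hne : ∀ i, i ≠ 0 → ¬ G.Adj v (p i)) :
    IsInducedPathOn G (k + 2) (Fin.cons v p) := by
  have hv' : ∀ i, G.Adj v (p i) ↔ i.val = 0 := fun i => by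
    by_cases hi : i = 0
    · simp [hi, h0]
    · exact iff_of_false (hne i hi) (Fin.val_ne_iff.2 hi)
  refine ⟨Fin.cons_injective_iff.2 ⟨hv, hp.1⟩, fun i j => ?_⟩
  induction i using Fin.cases <;> induction j using Fin.cases <;>
    simp only [Fin.cons_zero, Fin.cons_succ, Fin.val_zero, Fin.val_succ]
  · simp
  · rw [hv']; omega
  · rw [G.adj_comm, hv']; omega
  · rw [hp.2]; omega

theorem IsInducedPathOn.isInducedCycleOn_snoc {q : Fin (m + 2) → V}
    (hq : IsInducedPathOn G (m + 2) q) {w : V} (hw : w ∉ range q) (h0 : G.Adj w (q 0))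
    (hl : G.Adj w (q (Fin.last _)))
    (hmid : ∀ i, i ≠ 0 → i ≠ Fin.last _ → ¬ G.Adj w (q i)) :
    IsInducedCycleOn G (m + 3) (Fin.snoc q w) := by
  have hw' : ∀ i, G.Adj w (q i) ↔ i.val = 0 ∨ i.val = m + 1 := fun i => by
    by_cases hi0 : i = 0
    · simp [hi0, h0]
    by_cases hil : i = Fin.last _
    · simp [hil, hl]
    have h0' : i.val ≠ 0 := Fin.val_ne_iff.2 hi0
    have hl' : i.val ≠ m + 1 := Fin.val_ne_iff.2 hil
    exact iff_of_false (hmid i hi0 hil) (by omega)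
  refine isInducedCycleOn_iff.2
    ⟨by omega, Fin.snoc_injective_iff.2 ⟨hq.1, hw⟩, fun i j => ?_⟩
  induction i using Fin.lastCases <;> induction j using Fin.lastCases <;>
    simp only [Fin.snoc_castSucc, Fin.snoc_last, Fin.val_castSucc, Fin.val_last, true_and]
  · simp
  · rw [hw']; omega
  · rw [G.adj_comm, hw']; omega
  · rw [hq.2]; omega

theorem InInducedCycle.mono {p : Fin k → V} {q : Fin m → V} (hq : InInducedCycle G q)
    (h : range p ⊆ range q) : InInducedCycle G p :=
  let ⟨n, c, hc, hqc⟩ := hq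
  ⟨n, c, hc, h.trans hqc⟩

theorem IsInducedPathOn.inInducedCycle_of_apex {q : Fin (m + 2) → V}
    (hq : IsInducedPathOn G (m + 2) q) {w : V} (hw : w ∉ range q) (h0 : G.Adj w (q 0))
    (hl : G.Adj w (q (Fin.last _)))
    (hmid : ∀ i, i ≠ 0 → i ≠ Fin.last _ → ¬ G.Adj w (q i)) : InInducedCycle G q :=
  ⟨_, _, hq.isInducedCycleOn_snoc hw h0 hl hmid,
    fun _ ⟨i, hi⟩ => ⟨i.castSucc, by simp [hi]⟩⟩

end Basics

section Merge
variable {G : SimpleGraph V} {w u : V}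

theorem mergeGraph_adj_of_ne {a b : V} (haw : a ≠ w) (hbw : b ≠ w) (hau : a ≠ u)
    (hbu : b ≠ u) : (mergeGraph G w u).Adj a b ↔ G.Adj a b := by
  refine ⟨fun ⟨_, _, _, h⟩ => ?_, fun h => ⟨h.ne, hau, hbu, Or.inl h⟩⟩
  rcases h with h | ⟨rfl, _⟩ | ⟨rfl, _⟩
  · exact h
  · exact absurd rfl haw
  · exact absurd rfl hbw

theorem mergeGraph_adj_left {z : V} (hwu : w ≠ u) (hzw : z ≠ w) (hzu : z ≠ u) :
    (mergeGraph G w u).Adj w z ↔ G.Adj w z ∨ G.Adj u z := by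
  refine ⟨fun ⟨_, _, _, h⟩ => ?_, fun h => ⟨hzw.symm, hwu, hzu, ?_⟩⟩
  · rcases h with h | ⟨-, h⟩ | ⟨rfl, -⟩
    · exact Or.inl h
    · exact Or.inr h
    · exact absurd rfl hzw
  · rcases h with h | h
    · exact Or.inl h
    · exact Or.inr (Or.inl ⟨rfl, h⟩)

theorem notMem_support_mergeGraph : u ∉ (mergeGraph G w u).support :=
  fun ⟨_, h⟩ => h.2.1 rfl

theorem support_mergeGraph_subset (hwu : G.Adj w u) :
    (mergeGraph G w u).support ⊆ G.support \ {u} := by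
  rintro a ⟨b, hab, hau, -, h⟩
  refine ⟨?_, hau⟩
  rcases h with h | ⟨rfl, -⟩ | ⟨-, h⟩
  · exact ⟨b, h⟩
  · exact ⟨u, hwu⟩
  · exact ⟨u, h⟩

theorem ncard_support_lt_of_subset_sdiff [Finite V] {G' : SimpleGraph V} (hu : u ∈ G.support)
    (h : G'.support ⊆ G.support \ {u}) : G'.support.ncard < G.support.ncard :=
  ncard_lt_ncard (h.trans_ssubset (sdiff_singleton_ssubset.2 hu)) (toFinite _)

end Merge

section Extension
variable {G : SimpleGraph V} {k : ℕ} {p : Fin k → V} {q : Fin (k + 2) → V}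

theorem IsExtension.exists_eq (hq : IsExtension G p q) {j : Fin (k + 2)} (h0 : j ≠ 0)
    (hl : j ≠ Fin.last _) : ∃ i, q j = p i := by
  have h0' : j.val ≠ 0 := Fin.val_ne_iff.2 h0
  have hl' : j.val ≠ k + 1 := Fin.val_ne_iff.2 hl
  obtain ⟨i, rfl⟩ : ∃ i : Fin k, i.succ.castSucc = j :=
    ⟨⟨j.val - 1, by omega⟩, Fin.ext (by simp only [Fin.val_castSucc, Fin.val_succ]; omega)⟩
  exact ⟨i, hq.2 i⟩

theorem IsExtension.exists_eq_or_adj (hk : 1 ≤ k) (hq : IsExtension G p q) (j : Fin (k + 2)) :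
    ∃ i, q j = p i ∨ G.Adj (q j) (p i) := by
  by_cases h0 : j = 0
  · refine ⟨⟨0, hk⟩, Or.inr ?_⟩
    rw [h0, ← hq.2]
    exact (hq.1.2 _ _).2 (Or.inl rfl)
  by_cases hl : j = Fin.last _
  · refine ⟨⟨k - 1, by omega⟩, Or.inr ?_⟩
    rw [hl, ← hq.2]
    refine (hq.1.2 _ _).2 (Or.inr ?_)
    simp only [Fin.val_castSucc, Fin.val_succ, Fin.val_last]
    omega
  obtain ⟨i, hi⟩ := hq.exists_eq h0 hl
  exact ⟨i, Or.inl hi⟩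

theorem IsExtension.notMem_range (hk : 1 ≤ k) (hq : IsExtension G p q) {x : V}
    (hx : ∀ i, OutsideClosedNbhd G x (p i)) : x ∉ range q := by
  rintro ⟨j, rfl⟩
  obtain ⟨i, h | h⟩ := hq.exists_eq_or_adj hk j
  · exact (hx i).1 h.symm
  · exact (hx i).2 h

end Extension

section CycleThroughEdge
variable {G : SimpleGraph V} {m : ℕ} {q : Fin (m + 2) → V} {w u : V}

theorem IsInducedPathOn.inInducedCycle_of_adj_head_of_adj_last
    (hq : IsInducedPathOn G (m + 2) q) (hwu : G.Adj w u) (hw : w ∉ range q) (hu : u ∉ range q)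
    (hmid : ∀ i, i ≠ 0 → i ≠ Fin.last _ → ¬ G.Adj w (q i) ∧ ¬ G.Adj u (q i))
    (hw0 : G.Adj w (q 0)) (hwl : ¬ G.Adj w (q (Fin.last _)))
    (hu0 : ¬ G.Adj u (q 0)) (hul : G.Adj u (q (Fin.last _))) : InInducedCycle G q := by
  have hq' : IsInducedPathOn G (m + 3) (Fin.cons w q) := by
    refine hq.cons hw hw0 fun i hi0 => ?_
    by_cases hil : i = Fin.last _
    · exact hil ▸ hwl
    · exact (hmid i hi0 hil).1
  have hu' : u ∉ range (Fin.cons w q : Fin (m + 3) → V) := by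
    rw [Fin.range_cons]
    rintro (h | h)
    · exact hwu.ne (Set.mem_singleton_iff.1 h).symm
    · exact hu h
  refine (hq'.inInducedCycle_of_apex hu' hwu.symm ?_ fun i hi0 hil => ?_).mono
    fun _ ⟨i, hi⟩ => ⟨i.succ, by simp [hi]⟩
  · rw [← Fin.succ_last, Fin.cons_succ]
    exact hul
  · obtain ⟨j, rfl⟩ := Fin.exists_succ_eq.2 hi0
    rw [Fin.cons_succ]
    by_cases hj0 : j = 0
    · exact hj0 ▸ hu0
    · exact (hmid j hj0 fun h => hil (by rw [h, Fin.succ_last])).2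

theorem IsInducedPathOn.inInducedCycle_of_adj_ends
    (hq : IsInducedPathOn G (m + 2) q) (hwu : G.Adj w u) (hw : w ∉ range q) (hu : u ∉ range q)
    (hmid : ∀ i, i ≠ 0 → i ≠ Fin.last _ → ¬ G.Adj w (q i) ∧ ¬ G.Adj u (q i))
    (h0 : G.Adj w (q 0) ∨ G.Adj u (q 0))
    (hl : G.Adj w (q (Fin.last _)) ∨ G.Adj u (q (Fin.last _))) : InInducedCycle G q := by
  by_cases hw2 : G.Adj w (q 0) ∧ G.Adj w (q (Fin.last _))
  · exact hq.inInducedCycle_of_apex hw hw2.1 hw2.2 fun i hi0 hil => (hmid i hi0 hil).1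
  by_cases hu2 : G.Adj u (q 0) ∧ G.Adj u (q (Fin.last _))
  · exact hq.inInducedCycle_of_apex hu hu2.1 hu2.2 fun i hi0 hil => (hmid i hi0 hil).2
  rcases h0 with h0 | h0
  · have hul : G.Adj u (q (Fin.last _)) := hl.resolve_left fun h => hw2 ⟨h0, h⟩
    exact hq.inInducedCycle_of_adj_head_of_adj_last hwu hw hu hmid h0 (fun h => hw2 ⟨h0, h⟩)
      (fun h => hu2 ⟨h, hul⟩) hul
  · have hwl : G.Adj w (q (Fin.last _)) := hl.resolve_right fun h => hu2 ⟨h0, h⟩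
    exact hq.inInducedCycle_of_adj_head_of_adj_last hwu.symm hu hw
      (fun i hi0 hil => (hmid i hi0 hil).symm) h0 (fun h => hu2 ⟨h0, h⟩)
      (fun h => hw2 ⟨h, hwl⟩) hwl

end CycleThroughEdge

section MergeLift
variable {G : SimpleGraph V} {w u : V}

theorem InInducedCycle.of_mergeGraph (hwu : G.Adj w u) {m : ℕ} {q : Fin m → V}
    (hw : w ∉ range q) (h : InInducedCycle (mergeGraph G w u) q) :
    InInducedCycle G q := by
  obtain ⟨n, c, hc, hqc⟩ := h
  have hcu : ∀ i, c i ≠ u := fun i hi => notMem_support_mergeGraph (hi ▸ hc.mem_support i)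
  by_cases hwc : ∃ t, c t = w
  swap
  · push Not at hwc
    exact ⟨n, c, hc.of_adj_iff fun i j => mergeGraph_adj_of_ne (hwc i) (hwc j) (hcu i) (hcu j),
      hqc⟩
  obtain ⟨t, rfl⟩ := hwc
  obtain ⟨n, rfl⟩ : ∃ n', n = n' + 3 := ⟨n - 3, by have := hc.1; omega⟩
  set Q : Fin (n + 2) → V := fun i => c (i.succ + t)
  have hQt : ∀ i, Q i ≠ c t := fun i h => Fin.succ_ne_zero i (by simpa using hc.2.1 h)
  have hQ : IsInducedPathOn G (n + 2) Q := (hc.rotate t).tail.of_adj_iff fun i j =>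
    mergeGraph_adj_of_ne (hQt i) (hQt j) (hcu _) (hcu _)
  have htQ : ∀ i, G.Adj (c t) (Q i) ∨ G.Adj u (Q i) ↔ i = 0 ∨ i = Fin.last _ := by
    intro i
    rw [← mergeGraph_adj_left hwu.ne (hQt i) (hcu _), Fin.ext_iff, Fin.ext_iff]
    obtain ⟨-, -, hadj⟩ := isInducedCycleOn_iff.1 (hc.rotate t)
    have := hadj 0 i.succ
    simp only [zero_add, Fin.val_zero, Fin.val_succ, Fin.val_last] at this ⊢
    rw [this, and_true]
    omega
  refine (hQ.inInducedCycle_of_adj_ends hwu ?_ ?_ (fun i hi0 hil => ?_) ((htQ 0).2 (Or.inl rfl))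
    ((htQ _).2 (Or.inr rfl))).mono ?_
  · rintro ⟨i, hi⟩
    exact hQt i hi
  · rintro ⟨i, hi⟩
    exact hcu _ hi
  · exact not_or.1 (mt (htQ i).1 (not_or.2 ⟨hi0, hil⟩))
  · rintro _ ⟨j, rfl⟩
    obtain ⟨i, hi⟩ := hqc ⟨j, rfl⟩
    have hit : i - t ≠ 0 := sub_ne_zero.2 fun h => hw ⟨j, by rw [← hi, h]⟩
    obtain ⟨s, hs⟩ := Fin.exists_succ_eq.2 hit
    exact ⟨s, by simp only [Q, hs, sub_add_cancel, hi]⟩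

theorem IsAvoidable.of_mergeGraph (hwu : G.Adj w u) {k : ℕ} (hk : 1 ≤ k) {p : Fin k → V}
    (hpw : ∀ i, OutsideClosedNbhd G w (p i)) (hpu : ∀ i, OutsideClosedNbhd G u (p i))
    (hp : IsAvoidable (mergeGraph G w u) p) : IsAvoidable G p := by
  refine ⟨hp.1.of_adj_iff fun i j => mergeGraph_adj_of_ne (hpw i).1 (hpw j).1 (hpu i).1
    (hpu j).1, fun q hq => ?_⟩
  have hqw := hq.notMem_range hk hpw
  have hqu := hq.notMem_range hk hpu
  have hq' : IsExtension (mergeGraph G w u) p q :=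
    ⟨hq.1.of_adj_iff fun i j => (mergeGraph_adj_of_ne (fun h => hqw ⟨i, h⟩)
      (fun h => hqw ⟨j, h⟩) (fun h => hqu ⟨i, h⟩) (fun h => hqu ⟨j, h⟩)).symm, hq.2⟩
  exact (hp.2 q hq').of_mergeGraph hwu hqw

end MergeLift

/-- `R` is a union of components of `G - N[S]`. -/
def IsRegionAround (G : SimpleGraph V) (S R : Set V) : Prop :=
  (∀ v ∈ R, ∀ s ∈ S, OutsideClosedNbhd G s v) ∧
    ∀ v ∈ R, ∀ z, G.Adj v z → z ∈ R ∨ ∃ s ∈ S, G.Adj s z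

def ContainsInducedPath (G : SimpleGraph V) (k : ℕ) (R : Set V) : Prop :=
  ∃ p : Fin k → V, IsInducedPathOn G k p ∧ ∀ i, p i ∈ R

def ContainsAvoidablePath (G : SimpleGraph V) (k : ℕ) (R : Set V) : Prop :=
  ∃ p : Fin k → V, IsAvoidable G p ∧ ∀ i, p i ∈ R

section Region
variable {G : SimpleGraph V} {S R : Set V} {w u : V} {k : ℕ}

theorem not_outsideClosedNbhd_iff {v : V} : ¬ OutsideClosedNbhd G w v ↔ v = w ∨ G.Adj w v := by
  rw [OutsideClosedNbhd, not_and_or, not_not, not_not]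

theorem isRegionAround_outside (G : SimpleGraph V) (S : Set V) :
    IsRegionAround G S {v | ∀ s ∈ S, OutsideClosedNbhd G s v} := by
  refine ⟨fun v hv => hv, fun v hv z hvz => ?_⟩
  by_contra! h
  obtain ⟨s, hs, hsz⟩ : ∃ s ∈ S, ¬ OutsideClosedNbhd G s z := by simpa using h.1
  rcases not_outsideClosedNbhd_iff.1 hsz with rfl | hsz
  · exact (hv z hs).2 hvz.symm
  · exact h.2 s hs hsz

theorem IsRegionAround.sep_outside (hR : IsRegionAround G S R) (u : V) :
    IsRegionAround G (insert u S) {v ∈ R | OutsideClosedNbhd G u v} := by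
  refine ⟨fun v hv s hs => ?_, fun v hv z hvz => ?_⟩
  · rcases hs with rfl | hs
    · exact hv.2
    · exact hR.1 v hv.1 s hs
  rcases hR.2 v hv.1 z hvz with hz | ⟨s, hs, hsz⟩
  · by_cases hzu : OutsideClosedNbhd G u z
    · exact Or.inl ⟨hz, hzu⟩
    rcases not_outsideClosedNbhd_iff.1 hzu with rfl | huz
    · exact absurd hvz.symm hv.2.2
    · exact Or.inr ⟨u, mem_insert u S, huz⟩
  · exact Or.inr ⟨s, mem_insert_of_mem u hs, hsz⟩

theorem IsRegionAround.mergeGraph (hR : IsRegionAround G (insert u S) R) (hwu : G.Adj w u)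
    (hw : w ∈ S) : IsRegionAround (_root_.mergeGraph G w u) S R := by
  have hRS : ∀ v ∈ R, ∀ s ∈ S, v ≠ s ∧ ¬ (_root_.mergeGraph G w u).Adj s v := by
    intro v hv s hs
    have hvw := hR.1 v hv w (mem_insert_of_mem u hw)
    have hvu := hR.1 v hv u (mem_insert u S)
    have hvs := hR.1 v hv s (mem_insert_of_mem u hs)
    refine ⟨hvs.1, fun hsv => ?_⟩
    by_cases hsw : s = w
    · subst hsw
      exact (mergeGraph_adj_left hwu.ne hvw.1 hvu.1).1 hsv |>.elim hvw.2 hvu.2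
    · exact hvs.2 ((mergeGraph_adj_of_ne hsw hvw.1 hsv.2.1 hvu.1).1 hsv)
  refine ⟨fun v hv s hs => hRS v hv s hs, fun v hv z hvz => ?_⟩
  have hvw := hR.1 v hv w (mem_insert_of_mem u hw)
  have hvu := hR.1 v hv u (mem_insert u S)
  have hzu : z ≠ u := hvz.2.2.1
  have hzw : z ≠ w := by
    rintro rfl
    exact (hRS v hv z hw).2 hvz.symm
  have hmerged : ∀ {y}, G.Adj w y ∨ G.Adj u y → y ≠ w → y ≠ u →
      ∃ s ∈ S, (_root_.mergeGraph G w u).Adj s y :=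
    fun h hyw hyu => ⟨w, hw, (mergeGraph_adj_left hwu.ne hyw hyu).2 h⟩
  rcases hR.2 v hv z ((mergeGraph_adj_of_ne hvw.1 hzw hvu.1 hzu).1 hvz) with hz | ⟨s, hs, hsz⟩
  · exact Or.inl hz
  right
  rcases hs with rfl | hs
  · exact hmerged (Or.inr hsz) hzw hzu
  by_cases hsw : s = w
  · exact hmerged (Or.inl (hsw ▸ hsz)) hzw hzu
  by_cases hsu : s = u
  · exact hmerged (Or.inr (hsu ▸ hsz)) hzw hzu
  exact ⟨s, hs, (mergeGraph_adj_of_ne hsw hzw hsu hzu).2 hsz⟩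

theorem IsRegionAround.deleteIncidenceSet (hR : IsRegionAround G S R) (hu : u ∉ S) :
    IsRegionAround (G.deleteIncidenceSet u) S R := by
  refine ⟨fun v hv s hs => ⟨(hR.1 v hv s hs).1, fun h => (hR.1 v hv s hs).2
    (G.deleteIncidenceSet_le u h)⟩, fun v hv z hvz => ?_⟩
  rw [SimpleGraph.deleteIncidenceSet_adj] at hvz
  refine (hR.2 v hv z hvz.1).imp_right fun ⟨s, hs, hsz⟩ => ⟨s, hs, ?_⟩
  rw [SimpleGraph.deleteIncidenceSet_adj]
  exact ⟨hsz, fun h => hu (h ▸ hs), hvz.2.2⟩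

end Region

section DeleteLift
variable {G : SimpleGraph V} {R : Set V} {w u : V} {k : ℕ}

theorem IsInducedPathOn.inInducedCycle_of_head_eq (hk : 1 ≤ k) (hwu : G.Adj w u)
    (hR : IsRegionAround G {w} R)
    (hR₁ : ¬ ContainsInducedPath G k {v ∈ R | OutsideClosedNbhd G u v})
    {q : Fin (k + 2) → V} (hq : IsInducedPathOn G (k + 2) q)
    (hmid : ∀ j, j ≠ 0 → j ≠ Fin.last _ → q j ∈ R) (h0 : q 0 = u) :
    InInducedCycle G q := by
  -- The far end of `q` is in `R` or in `N(w)`: in `R`, the last `k` vertices of `q` would be an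
  -- induced `P_k` of `R` outside `N[u]`; in `N(w)`, the vertex `w` closes `q` into a cycle.
  have hkR : q ⟨k, by omega⟩ ∈ R :=
    hmid _ (Fin.ne_of_val_ne (by simp only [Fin.val_zero]; omega)) (Fin.ne_of_val_ne (by simp))
  have hkl : G.Adj (q ⟨k, by omega⟩) (q (Fin.last _)) := (hq.2 _ _).2 (Or.inl rfl)
  rcases hR.2 _ hkR _ hkl with hlR | ⟨_, rfl, hwl⟩
  · refine absurd ⟨_, hq.segment 2 (by omega), fun i => ⟨?_, ?_, ?_⟩⟩ hR₁
    · by_cases hil : (⟨2 + i, by omega⟩ : Fin (k + 2)) = Fin.last _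
      · exact hil ▸ hlR
      · exact hmid _ (Fin.ne_of_val_ne (by simp)) hil
    · rw [← h0]
      exact fun h => absurd (congrArg Fin.val (hq.1 h)) (by simp)
    · rw [← h0, hq.2]
      simp only [Fin.val_zero]
      omega
  · refine hq.inInducedCycle_of_apex ?_ (h0 ▸ hwu) hwl
      fun j hj0 hjl => (hR.1 _ (hmid j hj0 hjl) _ rfl).2
    rintro ⟨j, hj⟩
    by_cases hj0 : j = 0
    · exact hwu.ne (hj ▸ hj0 ▸ h0)
    by_cases hjl : j = Fin.last _
    · exact G.irrefl (hj ▸ hjl ▸ hwl)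
    · exact (hR.1 _ (hmid j hj0 hjl) _ rfl).1 hj

theorem IsAvoidable.of_deleteIncidenceSet (hk : 1 ≤ k) (hwu : G.Adj w u)
    (hR : IsRegionAround G {w} R)
    (hR₁ : ¬ ContainsInducedPath G k {v ∈ R | OutsideClosedNbhd G u v})
    {p : Fin k → V} (hpR : ∀ i, p i ∈ R) (hp : IsAvoidable (G.deleteIncidenceSet u) p) :
    IsAvoidable G p := by
  have hRu : ∀ v ∈ R, v ≠ u := fun v hv h => (hR.1 v hv w rfl).2 (h ▸ hwu)
  have hG : ∀ {a b}, a ≠ u → b ≠ u → ((G.deleteIncidenceSet u).Adj a b ↔ G.Adj a b) :=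
    fun ha hb => by simp [SimpleGraph.deleteIncidenceSet_adj, ha, hb]
  refine ⟨hp.1.of_adj_iff fun i j => hG (hRu _ (hpR i)) (hRu _ (hpR j)), fun q hq => ?_⟩
  have hmid : ∀ j, j ≠ 0 → j ≠ Fin.last _ → q j ∈ R := fun j h0 hl => by
    obtain ⟨i, hi⟩ := hq.exists_eq h0 hl
    exact hi ▸ hpR i
  by_cases h0 : q 0 = u
  · exact hq.1.inInducedCycle_of_head_eq hk hwu hR hR₁ hmid h0
  by_cases hl : q (Fin.last _) = u
  · refine (hq.1.rev.inInducedCycle_of_head_eq hk hwu hR hR₁ (fun j hj0 hjl => hmid _ ?_ ?_)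
      (by simpa using hl)).mono fun _ ⟨j, hj⟩ => ⟨j.rev, by simp [hj]⟩
    · rwa [Fin.rev_ne_iff, Fin.rev_zero]
    · rwa [Fin.rev_ne_iff, Fin.rev_last]
  have hqu : ∀ j, q j ≠ u := fun j => by
    by_cases hj0 : j = 0
    · exact hj0 ▸ h0
    by_cases hjl : j = Fin.last _
    · exact hjl ▸ hl
    · exact hRu _ (hmid j hj0 hjl)
  obtain ⟨n, c, hc, hqc⟩ :=
    hp.2 q ⟨hq.1.of_adj_iff fun i j => (hG (hqu i) (hqu j)).symm, hq.2⟩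
  have hcu : ∀ i, c i ≠ u := fun i =>
    (SimpleGraph.support_deleteIncidenceSet_subset G u (hc.mem_support i)).2
  exact ⟨n, c, hc.of_adj_iff fun i j => hG (hcu i) (hcu j), hqc⟩

end DeleteLift

section Main
variable {G : SimpleGraph V} {R : Set V} {w u : V} {k : ℕ}

theorem ContainsInducedPath.containsAvoidablePath_of_isRegionAround_empty (hk : 1 ≤ k)
    (hR : IsRegionAround G ∅ R)
    (ih : ∀ C ⊂ R, ∀ w, IsRegionAround G {w} C → ContainsInducedPath G k C →
      ContainsAvoidablePath G k C)
    (hP : ContainsInducedPath G k R) : ContainsAvoidablePath G k R := by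
  obtain ⟨P, hP, hPR⟩ := hP
  by_cases hM : ContainsInducedPath G (k + 2) R
  swap
  · refine ⟨P, ⟨hP, fun q hq => absurd ⟨q, hq.1, fun j => ?_⟩ hM⟩, hPR⟩
    obtain ⟨i, h | h⟩ := hq.exists_eq_or_adj hk j
    · exact h ▸ hPR i
    · simpa using hR.2 _ (hPR i) _ h.symm
  obtain ⟨M, hM, hMR⟩ := hM
  set w := M (Fin.last _)
  set C := {v ∈ R | OutsideClosedNbhd G w v}
  have hC : IsRegionAround G {w} C := by simpa using hR.sep_outside w
  have hMw : ∀ i : Fin k, OutsideClosedNbhd G w (M ⟨0 + i, by omega⟩) := fun i =>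
    ⟨fun h => absurd (congrArg Fin.val (hM.1 h)) (by simp only [Fin.val_last]; omega),
      fun h => absurd ((hM.2 _ _).1 h) (by simp only [Fin.val_last]; omega)⟩
  have hCR : C ⊂ R :=
    ⟨fun v hv => hv.1, fun h => (h (hMR (Fin.last _))).2.1 rfl⟩
  obtain ⟨p, hp, hpC⟩ := ih _ hCR w hC
    ⟨_, hM.segment 0 (by omega), fun i => ⟨hMR _, hMw i⟩⟩
  exact ⟨p, hp, fun i => (hpC i).1⟩

theorem ContainsInducedPath.containsAvoidablePath_of_adj [Finite V] (hk : 1 ≤ k)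
    (hwu : G.Adj w u) (hR : IsRegionAround G {w} R)
    (ih : ∀ G' : SimpleGraph V, G'.support.ncard < G.support.ncard → ∀ R',
      IsRegionAround G' {w} R' → ContainsInducedPath G' k R' → ContainsAvoidablePath G' k R')
    (hP : ContainsInducedPath G k R) : ContainsAvoidablePath G k R := by
  have hu : u ∈ G.support := ⟨w, hwu.symm⟩
  have hRu : ∀ v ∈ R, v ≠ u := fun v hv h => (hR.1 v hv w rfl).2 (h ▸ hwu)
  set R₁ := {v ∈ R | OutsideClosedNbhd G u v}
  by_cases hP₁ : ContainsInducedPath (mergeGraph G w u) k R₁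
  · obtain ⟨p, hp, hpR⟩ := ih _ (ncard_support_lt_of_subset_sdiff hu
      (support_mergeGraph_subset hwu)) R₁ ((hR.sep_outside u).mergeGraph hwu rfl) hP₁
    exact ⟨p, hp.of_mergeGraph hwu hk (fun i => hR.1 _ (hpR i).1 w rfl) fun i => (hpR i).2,
      fun i => (hpR i).1⟩
  have hR₁ : ¬ ContainsInducedPath G k R₁ := fun ⟨Q, hQ, hQR⟩ =>
    hP₁ ⟨Q, hQ.of_adj_iff fun i j => (mergeGraph_adj_of_ne (hR.1 _ (hQR i).1 w rfl).1
      (hR.1 _ (hQR j).1 w rfl).1 (hQR i).2.1 (hQR j).2.1).symm, hQR⟩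
  have hR₂ := hR.deleteIncidenceSet (u := u) fun h => hwu.ne h.symm
  obtain ⟨P, hP, hPR⟩ := hP
  obtain ⟨p, hp, hpR⟩ := ih _ (ncard_support_lt_of_subset_sdiff hu
    (SimpleGraph.support_deleteIncidenceSet_subset G u)) R hR₂
    ⟨P, hP.of_adj_iff fun i j => by
      simp [SimpleGraph.deleteIncidenceSet_adj, hRu _ (hPR i), hRu _ (hPR j)], hPR⟩
  exact ⟨p, hp.of_deleteIncidenceSet hk hwu hR hR₁ hpR, hpR⟩

theorem ContainsInducedPath.containsAvoidablePath_of_isRegionAround [Finite V] (hk : 1 ≤ k)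
    (G : SimpleGraph V) (S R : Set V) (hS : S.Subsingleton) (hR : IsRegionAround G S R)
    (hP : ContainsInducedPath G k R) : ContainsAvoidablePath G k R := by
  rcases hS.eq_empty_or_singleton with rfl | ⟨w, rfl⟩
  · exact hP.containsAvoidablePath_of_isRegionAround_empty hk hR fun C hC w hC' hP' =>
      hP'.containsAvoidablePath_of_isRegionAround hk G {w} C Set.subsingleton_singleton hC'
  by_cases hw : ∃ u, G.Adj w u
  · obtain ⟨u, hwu⟩ := hw
    exact hP.containsAvoidablePath_of_adj hk hwu hR fun G' hG' R' hR' hP' =>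
      hP'.containsAvoidablePath_of_isRegionAround hk G' {w} R' Set.subsingleton_singleton hR'
  · push Not at hw
    refine hP.containsAvoidablePath_of_isRegionAround hk G ∅ R Set.subsingleton_empty
      ⟨by simp, fun v hv z hvz => ?_⟩
    simpa [hw] using hR.2 v hv z hvz
termination_by (G.support.ncard, R.ncard, S.ncard)
decreasing_by
  · exact Prod.Lex.right _ (Prod.Lex.left _ _ (Set.ncard_lt_ncard hC (Set.toFinite _)))
  · exact Prod.Lex.left _ _ hG'
  · subst_vars
    exact Prod.Lex.right _ (Prod.Lex.right _ (by simp))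

end Main

section Contraction
variable {G : SimpleGraph V} {k : ℕ}

theorem IsInducedPathOn.mergeGraph_castSucc {j : ℕ} {q : Fin (j + 2) → V}
    (hq : IsInducedPathOn G (j + 2) q) :
    IsInducedPathOn (mergeGraph G (q (Fin.last j).castSucc) (q (Fin.last _))) (j + 1)
      (q ∘ Fin.castSucc) := by
  have hu : ∀ i : Fin (j + 1), q i.castSucc ≠ q (Fin.last _) :=
    fun i h => Fin.castSucc_ne_last i (hq.1 h)
  have hua : ∀ i : Fin (j + 1), G.Adj (q i.castSucc) (q (Fin.last _)) → i = Fin.last j := by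
    intro i h
    rw [hq.2] at h
    ext
    simp only [Fin.val_castSucc, Fin.val_last] at h ⊢
    omega
  refine ⟨hq.1.comp (Fin.castSucc_injective _),
    fun a b => Iff.trans ?_ (hq.2 a.castSucc b.castSucc)⟩
  refine ⟨fun ⟨hne, _, _, h⟩ => ?_, fun h => ⟨h.ne, hu a, hu b, Or.inl h⟩⟩
  rcases h with h | ⟨ha, h⟩ | ⟨hb, h⟩
  · exact h
  · rw [Fin.castSucc_injective _ (hq.1 ha), hua b h.symm] at hne
    exact absurd rfl hne
  · rw [Fin.castSucc_injective _ (hq.1 hb), hua a h] at hne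
    exact absurd rfl hne

theorem ContainsInducedPath.containsAvoidablePath_of_isRegionAround_range [Finite V]
    (hk : 1 ≤ k) : ∀ {j : ℕ} {G : SimpleGraph V} {q : Fin (j + 1) → V},
      IsInducedPathOn G (j + 1) q → ∀ {R : Set V}, IsRegionAround G (range q) R →
        ContainsInducedPath G k R → ContainsAvoidablePath G k R
  | 0, G, q, _, R, hR, hP => hP.containsAvoidablePath_of_isRegionAround hk G (range q) R
      (fun _ ⟨a, ha⟩ _ ⟨b, hb⟩ => ha ▸ hb ▸ congrArg q (Fin.ext (by omega))) hR
  | j + 1, G, q, hq, R, hR, hP => by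
    have hwu : G.Adj (q (Fin.last j).castSucc) (q (Fin.last _)) := (hq.2 _ _).2 (Or.inl rfl)
    have hrange : range q = insert (q (Fin.last _)) (range (q ∘ Fin.castSucc)) := by
      ext v
      simp only [mem_range, mem_insert_iff, Fin.exists_fin_succ', comp_apply]
      tauto
    rw [hrange] at hR
    have hw : q (Fin.last j).castSucc ∈ insert (q (Fin.last _)) (range (q ∘ Fin.castSucc)) :=
      mem_insert_of_mem _ ⟨Fin.last j, rfl⟩
    have hu := mem_insert (q (Fin.last _)) (range (q ∘ Fin.castSucc))
    obtain ⟨P, hP, hPR⟩ := hP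
    obtain ⟨p, hp, hpR⟩ := containsAvoidablePath_of_isRegionAround_range hk
      hq.mergeGraph_castSucc (hR.mergeGraph hwu ⟨Fin.last j, rfl⟩)
      ⟨P, hP.of_adj_iff fun a b => (mergeGraph_adj_of_ne (hR.1 _ (hPR a) _ hw).1
        (hR.1 _ (hPR b) _ hw).1 (hR.1 _ (hPR a) _ hu).1 (hR.1 _ (hPR b) _ hu).1).symm, hPR⟩
    exact ⟨p, hp.of_mergeGraph hwu hk (fun i => hR.1 _ (hpR i) _ hw)
      (fun i => hR.1 _ (hpR i) _ hu), hpR⟩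

theorem exists_isAvoidable_nonadjacent [Finite V] (hk : 1 ≤ k) {m : ℕ} {p : Fin k → V}
    {q : Fin (m + 1) → V} (hp : IsInducedPathOn G k p) (hq : IsInducedPathOn G (m + 1) q)
    (hpq : ∀ i j, p i ≠ q j ∧ ¬ G.Adj (p i) (q j)) :
    ∃ p' : Fin k → V, IsAvoidable G p' ∧ ∀ i j, p' i ≠ q j ∧ ¬ G.Adj (p' i) (q j) := by
  obtain ⟨p', hp', hp'R⟩ := ContainsInducedPath.containsAvoidablePath_of_isRegionAround_range hk
    hq (isRegionAround_outside G (range q))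
    ⟨p, hp, fun i _ ⟨j, hj⟩ => hj ▸ ⟨(hpq i j).1, fun h => (hpq i j).2 h.symm⟩⟩
  exact ⟨p', hp', fun i j =>
    ⟨(hp'R i _ ⟨j, rfl⟩).1, fun h => (hp'R i _ ⟨j, rfl⟩).2 h.symm⟩⟩

end Contraction

/-- If a finite graph contains two vertex-disjoint, non-adjacent induced `P_k`, then it
contains two vertex-disjoint, non-adjacent induced `P_k` both avoidable in `G`. -/
theorem stmt9 [Fintype V] (k : ℕ) (hk : 1 ≤ k) (G : SimpleGraph V)
    (h : ∃ p q : Fin k → V, IsInducedPathOn G k p ∧ IsInducedPathOn G k q ∧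
      ∀ i j, p i ≠ q j ∧ ¬ G.Adj (p i) (q j)) :
    ∃ p q : Fin k → V, IsAvoidable G p ∧ IsAvoidable G q ∧
      ∀ i j, p i ≠ q j ∧ ¬ G.Adj (p i) (q j) := by
  obtain ⟨p, q, hp, hq, hpq⟩ := h
  obtain ⟨m, rfl⟩ : ∃ m, k = m + 1 := ⟨k - 1, by omega⟩
  obtain ⟨p₁, hp₁, hp₁q⟩ := exists_isAvoidable_nonadjacent hk hp hq hpq
  obtain ⟨q₁, hq₁, hq₁p₁⟩ := exists_isAvoidable_nonadjacent hk hq hp₁.1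
    fun i j => ⟨(hp₁q j i).1.symm, fun h => (hp₁q j i).2 h.symm⟩
  exact ⟨p₁, q₁, hp₁, hq₁, fun i j =>
    ⟨(hq₁p₁ j i).1.symm, fun h => (hq₁p₁ j i).2 h.symm⟩⟩
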